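/- Let S and A be nonempty types, r̃ : S × A → ℝ a bounded reward function, T : S × A → S, T̂ : S × A → Set S with T̂(s,a) nonempty for all (s,a), and γ ∈ [0,1). Assume T̂ is calibrated, i.e., T(s,a) ∈ T̂(s,a) for all (s,a). Then for any bounded Q₀ : S × A → ℝ and every natural number k, the k-fold iterates satisfy (B̲)ᵏQ₀(s,a) ≤ (B̃)ᵏQ₀(s,a) for all (s,a). -/

import Mathlib

/-- The Bellmin operator: `(B̲Q)(s,a) = r̃(s,a) + γ · inf_{s' ∈ T̂(s,a)} sup_{a' ∈ A} Q(s',a')`. -/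
noncomputable def bellmin {S A : Type*} (rt : S × A → ℝ) (That : S × A → Set S)
    (γ : ℝ) (Q : S × A → ℝ) : S × A → ℝ :=
  fun p => rt p + γ * ⨅ s' : That p, ⨆ a' : A, Q (s'.1, a')

/-- The Bellman operator with true dynamics:
`(B̃Q)(s,a) = r̃(s,a) + γ · sup_{a' ∈ A} Q(T(s,a),a')`. -/
noncomputable def bellman {S A : Type*} (rt : S × A → ℝ) (T : S × A → S)
    (γ : ℝ) (Q : S × A → ℝ) : S × A → ℝ :=
  fun p => rt p + γ * ⨆ a' : A, Q (T p, a')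

/-! Both operators map a function bounded by `C` to one bounded by `R + γ C`, so every iterate
is bounded and the conditional infima and suprema are the genuine ones. For a bounded `Q`,
calibration gives `B̲Q ≤ B̃Q` (the infimum over `T̂(s,a)` is at most the value at `T(s,a)`),
and `B̃` is monotone; an induction on `k` then compares the iterates. -/

section AbsBounds

variable {ι : Type*} [Nonempty ι] {f : ι → ℝ} {C : ℝ}

lemma abs_ciSup_le_of_forall_abs_le (hf : ∀ i, |f i| ≤ C) : |⨆ i, f i| ≤ C := by
  have hbdd : BddAbove (Set.range f) := ⟨C, by rintro _ ⟨i, rfl⟩; exact (abs_le.1 (hf i)).2⟩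
  obtain ⟨i₀⟩ := ‹Nonempty ι›
  refine abs_le.2 ⟨(abs_le.1 (hf i₀)).1.trans (le_ciSup hbdd i₀), ?_⟩
  exact ciSup_le fun i => (abs_le.1 (hf i)).2

lemma abs_ciInf_le_of_forall_abs_le (hf : ∀ i, |f i| ≤ C) : |⨅ i, f i| ≤ C := by
  have hbdd : BddBelow (Set.range f) := ⟨-C, by rintro _ ⟨i, rfl⟩; exact (abs_le.1 (hf i)).1⟩
  obtain ⟨i₀⟩ := ‹Nonempty ι›
  refine abs_le.2 ⟨le_ciInf fun i => (abs_le.1 (hf i)).1, ?_⟩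
  exact (ciInf_le hbdd i₀).trans (abs_le.1 (hf i₀)).2

end AbsBounds

lemma abs_add_mul_le {r x R C γ : ℝ} (hγ : 0 ≤ γ) (hr : |r| ≤ R) (hx : |x| ≤ C) :
    |r + γ * x| ≤ R + γ * C :=
  calc |r + γ * x| ≤ |r| + γ * |x| := by
        simpa only [abs_mul, abs_of_nonneg hγ] using abs_add_le r (γ * x)
    _ ≤ R + γ * C := by gcongr

lemma abs_iterate_le {X : Type*} {F : (X → ℝ) → X → ℝ} {g : ℝ → ℝ}
    (hF : ∀ Q C, (∀ x, |Q x| ≤ C) → ∀ x, |F Q x| ≤ g C)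
    {Q₀ : X → ℝ} {M : ℝ} (hQ₀ : ∀ x, |Q₀ x| ≤ M) (k : ℕ) :
    ∀ x, |F^[k] Q₀ x| ≤ g^[k] M := by
  induction k with
  | zero => exact hQ₀
  | succ k ih => simpa only [Function.iterate_succ_apply'] using hF _ _ ih

section BellmanOperators

variable {S A : Type*} {rt : S × A → ℝ} {R : ℝ} {γ : ℝ} {Q Q' : S × A → ℝ} {C : ℝ}

lemma abs_bellmin_le [Nonempty A] {That : S × A → Set S} (hT : ∀ p, (That p).Nonempty)
    (hγ : 0 ≤ γ) (hr : ∀ p, |rt p| ≤ R) (hQ : ∀ p, |Q p| ≤ C) (p : S × A) :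
    |bellmin rt That γ Q p| ≤ R + γ * C :=
  haveI := (hT p).to_subtype
  abs_add_mul_le hγ (hr p) <| abs_ciInf_le_of_forall_abs_le fun _ =>
    abs_ciSup_le_of_forall_abs_le fun _ => hQ _

lemma abs_bellman_le [Nonempty A] {T : S × A → S} (hγ : 0 ≤ γ)
    (hr : ∀ p, |rt p| ≤ R) (hQ : ∀ p, |Q p| ≤ C) (p : S × A) :
    |bellman rt T γ Q p| ≤ R + γ * C :=
  abs_add_mul_le hγ (hr p) <| abs_ciSup_le_of_forall_abs_le fun _ => hQ _

lemma bellmin_le_bellman [Nonempty A] {T : S × A → S} {That : S × A → Set S}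
    (hcal : ∀ p, T p ∈ That p) (hγ : 0 ≤ γ) (hQ : ∀ p, |Q p| ≤ C) (p : S × A) :
    bellmin rt That γ Q p ≤ bellman rt T γ Q p := by
  have hbdd : BddBelow (Set.range fun s' : That p => ⨆ a', Q (s'.1, a')) :=
    ⟨-C, by
      rintro _ ⟨s', rfl⟩
      exact (abs_le.1 (abs_ciSup_le_of_forall_abs_le fun a' => hQ (s'.1, a'))).1⟩
  unfold bellmin bellman
  gcongr rt p + γ * ?_
  exact ciInf_le hbdd ⟨T p, hcal p⟩

lemma bellman_mono {T : S × A → S} (hγ : 0 ≤ γ) (hQ' : ∀ p, Q' p ≤ C) (hle : Q ≤ Q')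
    (p : S × A) : bellman rt T γ Q p ≤ bellman rt T γ Q' p := by
  have hbdd : BddAbove (Set.range fun a' => Q' (T p, a')) :=
    ⟨C, by rintro _ ⟨a', rfl⟩; exact hQ' _⟩
  unfold bellman
  gcongr rt p + γ * ?_
  exact ciSup_mono hbdd fun a' => hle _

end BellmanOperators

theorem bellmin_iterate_le_bellman_iterate_general {S A : Type*} [Nonempty A]
    (rt : S × A → ℝ) (R : ℝ) (hr : ∀ p, |rt p| ≤ R)
    (T : S × A → S) (That : S × A → Set S)
    (γ : ℝ) (hγ0 : 0 ≤ γ)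
    (hcal : ∀ p, T p ∈ That p)
    (Q₀ : S × A → ℝ) (M : ℝ) (hQ₀ : ∀ p, |Q₀ p| ≤ M) :
    ∀ (k : ℕ) (p : S × A),
      (bellmin rt That γ)^[k] Q₀ p ≤ (bellman rt T γ)^[k] Q₀ p := by
  have hT : ∀ p, (That p).Nonempty := fun p => ⟨T p, hcal p⟩
  have hmin := abs_iterate_le (fun _ _ hQ => abs_bellmin_le hT hγ0 hr hQ) hQ₀
  have hmax := abs_iterate_le (fun _ _ hQ => abs_bellman_le (T := T) hγ0 hr hQ) hQ₀
  intro k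
  induction k with
  | zero => exact fun _ => le_rfl
  | succ k ih =>
    intro p
    simp only [Function.iterate_succ_apply']
    exact (bellmin_le_bellman hcal hγ0 (hmin k) p).trans
      (bellman_mono hγ0 (fun q => (abs_le.1 (hmax k q)).2) ih p)

/-- If `T̂` is calibrated, then every `k`-fold iterate of the Bellmin operator applied to a
bounded `Q₀` is pointwise at most the corresponding iterate of the Bellman operator. -/
theorem bellmin_iterate_le_bellman_iterate {S A : Type*} [Nonempty S] [Nonempty A]
    (rt : S × A → ℝ) (R : ℝ) (hr : ∀ p, |rt p| ≤ R)
    (T : S × A → S) (That : S × A → Set S)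
    (hT : ∀ p, (That p).Nonempty)
    (γ : ℝ) (hγ0 : 0 ≤ γ) (hγ1 : γ < 1)
    (hcal : ∀ p, T p ∈ That p)
    (Q₀ : S × A → ℝ) (M : ℝ) (hQ₀ : ∀ p, |Q₀ p| ≤ M) :
    ∀ (k : ℕ) (p : S × A),
      (bellmin rt That γ)^[k] Q₀ p ≤ (bellman rt T γ)^[k] Q₀ p :=
  bellmin_iterate_le_bellman_iterate_general rt R hr T That γ hγ0 hcal Q₀ M hQ₀
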